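/- Let S be a closed symmetric operator in a complex Hilbert space H with non-dense domain, set H₀ := closure(dom S) and S₀ := P_{H₀}S (domain dom S), and assume S is regular, i.e. S₀ is a closed operator in H₀. Let S̃ be a selfadjoint extension of S which is regular, meaning that the operator P_{H₀}S̃ with domain dom S̃ has closed graph. Then the compression S̃₀ of S̃ to H₀ (dom S̃₀ = dom S̃ ∩ H₀, S̃₀x = P_{H₀}(S̃x)) is a selfadjoint extension of S₀ in the Hilbert space H₀; consequently the semi-deficiency subspaces N'_i := N_i ∩ H₀ and N'_{−i} := N_{−i} ∩ H₀ have equal Hilbert dimension. -/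

import Mathlib

set_option synthInstance.maxHeartbeats 1000000

open scoped ComplexInnerProductSpace

variable {H : Type*} [NormedAddCommGroup H] [InnerProductSpace ℂ H] [CompleteSpace H]

/-- The compression of an operator `T` in `H` to a closed subspace `K`: the operator in the
Hilbert space `K` with domain `dom T ∩ K` acting as `x ↦ P_K (T x)`. -/
noncomputable def compression (K : Submodule ℂ H) [CompleteSpace K] (T : H →ₗ.[ℂ] H) :
    (↥K) →ₗ.[ℂ] (↥K) where
  domain := T.domain.comap K.subtype
  toFun := (K.orthogonalProjectionOnto).toLinearMap ∘ₗ T.toFun ∘ₗ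
    ((K.subtype.domRestrict (T.domain.comap K.subtype)).codRestrict T.domain fun x => x.2)

/-- The operator `P_K T` with domain `dom T`, mapping `H` into the closed subspace `K`. -/
noncomputable def projComp (K : Submodule ℂ H) [CompleteSpace K] (T : H →ₗ.[ℂ] H) :
    H →ₗ.[ℂ] (↥K) where
  domain := T.domain
  toFun := (K.orthogonalProjectionOnto).toLinearMap ∘ₗ T.toFun

/-- The deficiency subspace `N_λ = (ran (S - conj λ • I))ᗮ` of an operator `S`
(so that `defSubspace S λ = (ran (S - λ̄ I))ᗮ`). -/
noncomputable abbrev defSubspace (S : H →ₗ.[ℂ] H) (lam : ℂ) : Submodule ℂ H :=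
  (LinearMap.range (S.toFun - (starRingEnd ℂ lam) • S.domain.subtype))ᗮ

/-! The compression `C` of `S̃` to `H₀` is symmetric, and its domain `dom S̃ ∩ H₀ ⊇ dom S` is
dense in `H₀`. The adjoint of `A := P_{H₀} S̃ : H → H₀` is `S̃` restricted to `dom S̃ ∩ H₀`, so
regularity of `S̃` (`A` closed) gives `A = A**`, and testing `A**` against the graph of `A*`
shows `C* ⊆ C`. Since `S₀ ⊆ C` with `C` selfadjoint in `H₀`, the Cayley transform of `C` is a
unitary of `H₀` carrying `ran (S₀ + i)` onto `ran (S₀ - i)`, hence their orthogonal complements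
in `H₀` onto each other; these complements are `N'_i` and `N'_{-i}`. -/

def Submodule.infLinearIsometryEquivComap {R E : Type*} [Ring R] [SeminormedAddCommGroup E]
    [Module R E] (p K : Submodule R E) : ↥(p ⊓ K) ≃ₗᵢ[R] p.comap K.subtype where
  toFun x := ⟨⟨x, x.2.2⟩, x.2.1⟩
  invFun y := ⟨y, y.2, (y : K).2⟩
  map_add' _ _ := rfl
  map_smul' _ _ := rfl
  left_inv _ := rfl
  right_inv _ := rfl
  norm_map' _ := rfl

section GraphAdjoint

open LinearPMap

variable {𝕜 E F : Type*} [RCLike 𝕜] [NormedAddCommGroup E] [InnerProductSpace 𝕜 E]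
  [NormedAddCommGroup F] [InnerProductSpace 𝕜 F] [CompleteSpace E] [CompleteSpace F]

theorem Submodule.adjoint_adjoint_le {g : Submodule 𝕜 (E × F)}
    (hg : IsClosed (g : Set (E × F))) : g.adjoint.adjoint ≤ g := by
  set gL : Submodule 𝕜 (WithLp 2 (E × F)) := g.comap (WithLp.linearEquiv 2 𝕜 (E × F)).toLinearMap
  have hgL : IsClosed (gL : Set (WithLp 2 (E × F))) :=
    hg.preimage (WithLp.prod_continuous_ofLp _ _ _)
  rintro ⟨y, w⟩ hyw
  suffices WithLp.toLp 2 (y, w) ∈ gLᗮᗮ by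
    rwa [Submodule.orthogonal_orthogonal_eq_closure, hgL.submodule_topologicalClosure_eq] at this
  intro u hu
  have hadj : (u.snd, -u.fst) ∈ g.adjoint := by
    refine (Submodule.mem_adjoint_iff _ _).2 fun a b hab ↦ ?_
    have := hu (WithLp.toLp 2 (a, b)) hab
    simp only [WithLp.prod_inner_apply, WithLp.ofLp_fst, WithLp.ofLp_snd] at this
    simp only [inner_neg_right]
    linear_combination this
  have := (Submodule.mem_adjoint_iff _ _).1 hyw _ _ hadj
  simp only [WithLp.prod_inner_apply, WithLp.ofLp_fst, WithLp.ofLp_snd, inner_neg_left] at this ⊢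
  linear_combination -this

theorem LinearPMap.adjoint_adjoint_eq_of_isClosed {T : E →ₗ.[𝕜] F}
    (hT : Dense (T.domain : Set E)) (hT' : Dense (T†.domain : Set F)) (hc : T.IsClosed) :
    T†† = T := by
  refine le_antisymm (le_of_le_graph ?_) ((adjoint_isFormalAdjoint hT).le_adjoint hT')
  rw [adjoint_graph_eq_graph_adjoint hT', adjoint_graph_eq_graph_adjoint hT]
  exact Submodule.adjoint_adjoint_le hc

theorem IsSelfAdjoint.isFormalAdjoint {A : E →ₗ.[𝕜] E} (hA : IsSelfAdjoint A) :
    A.IsFormalAdjoint A := by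
  simpa only [isSelfAdjoint_def.1 hA] using adjoint_isFormalAdjoint hA.dense_domain

end GraphAdjoint

namespace LinearPMap

open ComplexConjugate

variable {E : Type*} [NormedAddCommGroup E] [InnerProductSpace ℂ E] {B S : E →ₗ.[ℂ] E}

theorem IsFormalAdjoint.im_inner_self_eq_zero (hB : B.IsFormalAdjoint B)
    (x : B.domain) : (⟪(x : E), B x⟫).im = 0 := by
  rw [← Complex.conj_eq_iff_im, inner_conj_symm]
  exact hB x x

theorem IsFormalAdjoint.abs_im_mul_norm_le (hB : B.IsFormalAdjoint B) (μ : ℂ)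
    (x : B.domain) : |μ.im| * ‖(x : E)‖ ≤ ‖B x - μ • (x : E)‖ := by
  have him : (⟪(x : E), B x - μ • (x : E)⟫).im = -(μ.im * ‖(x : E)‖ ^ 2) := by
    rw [inner_sub_right, inner_smul_right, inner_self_eq_norm_sq_to_K, Complex.sub_im,
      hB.im_inner_self_eq_zero]
    simp [← Complex.ofReal_pow]
  have : |μ.im| * ‖(x : E)‖ * ‖(x : E)‖ ≤ ‖B x - μ • (x : E)‖ * ‖(x : E)‖ :=
    calc |μ.im| * ‖(x : E)‖ * ‖(x : E)‖ = |(⟪(x : E), B x - μ • (x : E)⟫).im| := by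
          rw [him, abs_neg, abs_mul, abs_of_nonneg (sq_nonneg ‖(x : E)‖)]; ring
      _ ≤ ‖(x : E)‖ * ‖B x - μ • (x : E)‖ :=
          (Complex.abs_im_le_norm _).trans (norm_inner_le_norm _ _)
      _ = _ := mul_comm _ _
  rcases (norm_nonneg (x : E)).eq_or_lt with h0 | h0
  · rw [← h0, mul_zero]; exact norm_nonneg _
  · exact le_of_mul_le_mul_right this h0

theorem IsFormalAdjoint.norm_sub_conj_smul (hB : B.IsFormalAdjoint B) (μ : ℂ)
    (x : B.domain) : ‖B x - conj μ • (x : E)‖ = ‖B x - μ • (x : E)‖ := by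
  have hre (ν : ℂ) : RCLike.re ⟪B x, ν • (x : E)⟫ = ν.re * (⟪B x, (x : E)⟫).re := by
    have hreal : (⟪B x, (x : E)⟫).im = 0 := by
      rw [← inner_conj_symm, Complex.conj_im, hB.im_inner_self_eq_zero, neg_zero]
    rw [inner_smul_right, RCLike.re_to_complex, Complex.mul_re, hreal, mul_zero, sub_zero]
  rw [← sq_eq_sq₀ (norm_nonneg _) (norm_nonneg _), @norm_sub_sq ℂ, @norm_sub_sq ℂ, hre, hre,
    norm_smul, norm_smul, Complex.norm_conj, Complex.conj_re]

theorem IsFormalAdjoint.eq_zero_of_apply_eq_smul (hB : B.IsFormalAdjoint B) {μ : ℂ}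
    (hμ : μ.im ≠ 0) {x : B.domain} (hx : B x = μ • (x : E)) : x = 0 := by
  have := hB.abs_im_mul_norm_le μ x
  rw [hx, sub_self, norm_zero] at this
  exact Submodule.coe_eq_zero.1 <| norm_le_zero_iff.1 <|
    nonpos_of_mul_nonpos_right this (abs_pos.2 hμ)

variable [CompleteSpace E]

theorem IsFormalAdjoint.isClosed_range_sub_smul (hB : B.IsFormalAdjoint B)
    (hc : B.IsClosed) {μ : ℂ} (hμ : μ.im ≠ 0) :
    _root_.IsClosed (LinearMap.range (B.toFun - μ • B.domain.subtype) : Set E) := by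
  have : CompleteSpace B.graph := hc.completeSpace_coe
  let Φ : B.graph →L[ℂ] E :=
    (ContinuousLinearMap.snd ℂ E E - μ • ContinuousLinearMap.fst ℂ E E).comp B.graph.subtypeL
  have hΦ : Set.range Φ = LinearMap.range (B.toFun - μ • B.domain.subtype) := by
    ext v
    constructor
    · rintro ⟨⟨⟨_, _⟩, hg⟩, rfl⟩
      obtain ⟨x, rfl, rfl⟩ := (mem_graph_iff B).1 hg
      exact ⟨x, rfl⟩
    · rintro ⟨x, rfl⟩
      exact ⟨⟨_, mem_graph B x⟩, rfl⟩
  set c := |μ.im|⁻¹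
  have hbound (g : B.graph) : ‖g‖ ≤ (c + (1 + ‖μ‖ * c)) * ‖Φ g‖ := by
    obtain ⟨⟨_, _⟩, hg⟩ := g
    obtain ⟨x, rfl, rfl⟩ := (mem_graph_iff B).1 hg
    have hx : ‖(x : E)‖ ≤ c * ‖Φ ⟨_, hg⟩‖ := by
      rw [le_inv_mul_iff₀ (abs_pos.2 hμ)]
      exact hB.abs_im_mul_norm_le μ x
    have hBx : ‖B x‖ ≤ (1 + ‖μ‖ * c) * ‖Φ ⟨_, hg⟩‖ :=
      calc ‖B x‖ = ‖Φ ⟨_, hg⟩ + μ • (x : E)‖ := by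
            congr 1
            exact (sub_add_cancel _ _).symm
        _ ≤ ‖Φ ⟨_, hg⟩‖ + ‖μ‖ * (c * ‖Φ ⟨_, hg⟩‖) := by
            grw [norm_add_le, norm_smul, hx]
        _ = _ := by ring
    have h₁ : 0 ≤ c * ‖Φ ⟨_, hg⟩‖ := by positivity
    have h₂ : 0 ≤ (1 + ‖μ‖ * c) * ‖Φ ⟨_, hg⟩‖ := by positivity
    show max ‖(x : E)‖ ‖B x‖ ≤ _
    exact max_le (by linarith) (by linarith)
  rw [← hΦ]
  refine (Φ.antilipschitz_of_bound (K := ⟨_, ?_⟩) hbound).isClosed_range Φ.uniformContinuous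
  positivity

theorem orthogonal_range_sub_smul_eq_bot (hB : IsSelfAdjoint B) {μ : ℂ} (hμ : μ.im ≠ 0) :
    (LinearMap.range (B.toFun - μ • B.domain.subtype))ᗮ = ⊥ := by
  refine (Submodule.eq_bot_iff _).2 fun v hv ↦ ?_
  have hgraph : (v, conj μ • v) ∈ B.graph := by
    rw [← isSelfAdjoint_def.1 hB, adjoint_graph_eq_graph_adjoint hB.dense_domain,
      Submodule.mem_adjoint_iff]
    rintro _ _ hab
    obtain ⟨x, rfl, rfl⟩ := (mem_graph_iff B).1 hab
    dsimp only
    rw [inner_smul_right, ← inner_smul_left, ← inner_sub_left]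
    exact (Submodule.mem_orthogonal _ _).1 hv _ ⟨x, rfl⟩
  obtain ⟨x, rfl, hBx⟩ := (mem_graph_iff B).1 hgraph
  rw [hB.isFormalAdjoint.eq_zero_of_apply_eq_smul (by simpa using hμ) hBx, Submodule.coe_zero]

theorem bijective_sub_smul (hB : IsSelfAdjoint B) {μ : ℂ} (hμ : μ.im ≠ 0) :
    Function.Bijective (B.toFun - μ • B.domain.subtype) := by
  refine ⟨(injective_iff_map_eq_zero _).2 fun x hx ↦ ?_, LinearMap.range_eq_top.1 ?_⟩
  · exact hB.isFormalAdjoint.eq_zero_of_apply_eq_smul hμ (sub_eq_zero.1 hx)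
  · have : CompleteSpace (LinearMap.range (B.toFun - μ • B.domain.subtype)) :=
      (hB.isFormalAdjoint.isClosed_range_sub_smul hB.isClosed hμ).completeSpace_coe
    exact Submodule.orthogonal_eq_bot_iff.1 (orthogonal_range_sub_smul_eq_bot hB hμ)

theorem exists_linearIsometryEquiv_cayley (hB : IsSelfAdjoint B) {μ : ℂ} (hμ : μ.im ≠ 0) :
    ∃ U : E ≃ₗᵢ[ℂ] E, ∀ x : B.domain,
      U ((B.toFun - conj μ • B.domain.subtype) x) = (B.toFun - μ • B.domain.subtype) x := by
  let e₁ := LinearEquiv.ofBijective _ (bijective_sub_smul hB (μ := conj μ) (by simpa using hμ))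
  let e₂ := LinearEquiv.ofBijective _ (bijective_sub_smul hB hμ)
  refine ⟨{ e₁.symm.trans e₂ with norm_map' := fun v ↦ ?_ }, fun x ↦ ?_⟩
  · obtain ⟨x, rfl⟩ := e₁.surjective v
    show ‖e₂ (e₁.symm (e₁ x))‖ = ‖e₁ x‖
    rw [e₁.symm_apply_apply]
    exact (hB.isFormalAdjoint.norm_sub_conj_smul μ x).symm
  · show e₂ (e₁.symm (e₁ x)) = e₂ x
    rw [e₁.symm_apply_apply]

theorem nonempty_defSubspace_equiv_of_le_isSelfAdjoint (hB : IsSelfAdjoint B) (hS : S ≤ B)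
    {μ : ℂ} (hμ : μ.im ≠ 0) : Nonempty (defSubspace S μ ≃ₗᵢ[ℂ] defSubspace S (conj μ)) := by
  obtain ⟨U, hU⟩ := exists_linearIsometryEquiv_cayley hB hμ
  have hUS : (U.toLinearEquiv : E →ₗ[ℂ] E) ∘ₗ (S.toFun - conj μ • S.domain.subtype) =
      S.toFun - conj (conj μ) • S.domain.subtype := by
    ext x
    have hx : S x = B ⟨x, hS.1 x.2⟩ := hS.2 rfl
    simpa [hx] using hU ⟨x, hS.1 x.2⟩
  have hmap := Submodule.map_orthogonal_equiv
    (LinearMap.range (S.toFun - conj μ • S.domain.subtype)) U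
  rw [← LinearMap.range_comp, hUS] at hmap
  exact ⟨(U.submoduleMap _).trans (LinearIsometryEquiv.ofEq _ _ hmap)⟩

end LinearPMap

section Compression

set_option linter.unusedSectionVars false

open LinearPMap ComplexConjugate

variable (K : Submodule ℂ H) [CompleteSpace K] {S T : H →ₗ.[ℂ] H}

theorem mem_graph_adjoint_projComp_iff (hT : Dense (T.domain : Set H)) (y : K) (w : H) :
    (y, w) ∈ (projComp K T)†.graph ↔ ((y : H), w) ∈ T†.graph := by
  rw [adjoint_graph_eq_graph_adjoint (T := projComp K T) hT, adjoint_graph_eq_graph_adjoint hT,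
    Submodule.mem_adjoint_iff, Submodule.mem_adjoint_iff]
  simp only [mem_graph_iff, forall_exists_index, and_imp]
  have key (x : T.domain) : ⟪projComp K T x, y⟫ = ⟪T x, (y : H)⟫ :=
    Submodule.inner_orthogonalProjectionOnto_eq_of_mem_right y _
  constructor <;> rintro h _ _ x rfl rfl
  · exact (congrArg (· - _) (key x)).symm.trans (h _ _ x rfl rfl)
  · exact (congrArg (· - _) (key x)).trans (h _ _ x rfl rfl)

theorem dense_compression_domain (p : Submodule ℂ H) (hp : p ≤ T.domain) :
    Dense ((compression p.topologicalClosure T).domain : Set p.topologicalClosure) :=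
  Subtype.dense_iff.2 <| (p.topologicalClosure_coe).subset.trans <| closure_mono
    fun x hx ↦ ⟨⟨x, p.le_topologicalClosure hx⟩, hp hx, rfl⟩

theorem compression_mono (h : S ≤ T) : compression K S ≤ compression K T :=
  ⟨fun _ hx ↦ h.1 hx, fun _ _ hxy ↦ congrArg K.orthogonalProjectionOnto
    (h.2 (congrArg (fun v : K ↦ (v : H)) hxy))⟩

theorem mem_graph_compression_iff (y z : K) :
    (y, z) ∈ (compression K T).graph ↔ ((y : H), z) ∈ (projComp K T).graph := by
  simp only [mem_graph_iff]
  constructor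
  · rintro ⟨x, rfl, rfl⟩
    exact ⟨⟨x, x.2⟩, rfl, rfl⟩
  · rintro ⟨x, hx, rfl⟩
    refine ⟨⟨y, show (y : H) ∈ T.domain from hx ▸ x.2⟩, rfl, ?_⟩
    show K.orthogonalProjectionOnto (T _) = K.orthogonalProjectionOnto (T x)
    congr 2
    exact Subtype.ext hx.symm

theorem mem_graph_projComp_of_mem_graph {x : H} {w : H} (h : (x, w) ∈ T.graph) :
    (x, K.orthogonalProjectionOnto w) ∈ (projComp K T).graph := by
  obtain ⟨x', rfl, rfl⟩ := (mem_graph_iff T).1 h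
  exact mem_graph (projComp K T) x'

theorem isFormalAdjoint_compression (hT : T.IsFormalAdjoint T) :
    (compression K T).IsFormalAdjoint (compression K T) := fun x y ↦ by
  show ⟪K.orthogonalProjectionOnto (T _), y⟫ = ⟪(x : K), K.orthogonalProjectionOnto (T _)⟫
  rw [Submodule.inner_orthogonalProjectionOnto_eq_of_mem_right,
    Submodule.inner_orthogonalProjectionOnto_eq_of_mem_left]
  exact hT ⟨((x : K) : H), x.2⟩ ⟨((y : K) : H), y.2⟩

theorem isSelfAdjoint_compression (hT : IsSelfAdjoint T)
    (hd : Dense ((compression K T).domain : Set K)) (hA : (projComp K T).IsClosed) :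
    IsSelfAdjoint (compression K T) := by
  have hT' : T† = T := hT
  have hdT : Dense (T.domain : Set H) := hT.dense_domain
  have hAadj (y : K) (w : H) : (y, w) ∈ (projComp K T)†.graph ↔ ((y : H), w) ∈ T.graph := by
    rw [mem_graph_adjoint_projComp_iff K hdT, hT']
  have hdomain : (projComp K T)†.domain = (compression K T).domain := by
    ext y
    simp_rw [mem_domain_iff (f := (projComp K T)†), hAadj]
    exact (mem_domain_iff (f := T)).symm
  have hdA : Dense ((projComp K T)†.domain : Set K) := hdomain ▸ hd
  have hAA : (projComp K T)†† = projComp K T := adjoint_adjoint_eq_of_isClosed hdT hdA hA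
  have hsymm := isFormalAdjoint_compression K hT.isFormalAdjoint
  rw [isSelfAdjoint_def]
  refine le_antisymm (le_of_le_graph ?_) (hsymm.le_adjoint hd)
  rintro ⟨y, z⟩ hyz
  rw [adjoint_graph_eq_graph_adjoint hd, Submodule.mem_adjoint_iff] at hyz
  rw [mem_graph_compression_iff, ← hAA, adjoint_graph_eq_graph_adjoint hdA,
    Submodule.mem_adjoint_iff]
  intro a b hab
  have := hyz _ _ <| (mem_graph_compression_iff K a _).2 <|
    mem_graph_projComp_of_mem_graph K ((hAadj a b).1 hab)
  rwa [Submodule.inner_orthogonalProjectionOnto_eq_of_mem_right] at this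

theorem defSubspace_compression (hK : S.domain ≤ K) (lam : ℂ) :
    defSubspace (compression K S) lam = (defSubspace S lam).comap K.subtype := by
  ext v
  simp only [Submodule.mem_comap, Submodule.mem_orthogonal, LinearMap.mem_range,
    forall_exists_index, forall_apply_eq_imp_iff]
  have key (x : (compression K S).domain) :
      ⟪((compression K S).toFun - conj lam • (compression K S).domain.subtype) x, v⟫ =
        ⟪(S.toFun - conj lam • S.domain.subtype) ⟨x, x.2⟩, (v : H)⟫ := by
    simp only [LinearMap.sub_apply, LinearMap.smul_apply, inner_sub_left, inner_smul_left]
    congr 1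
    exact Submodule.inner_orthogonalProjectionOnto_eq_of_mem_right v (S ⟨x, x.2⟩)
  exact ⟨fun h x ↦ (key ⟨⟨x, hK x.2⟩, x.2⟩).symm.trans (h _), fun h x ↦ (key x).trans (h _)⟩

end Compression

theorem isSelfAdjoint_compression_of_regular_extension_general
    (S : H →ₗ.[ℂ] H)
    (St : H →ₗ.[ℂ] H) (hext : S ≤ St) (hsa : IsSelfAdjoint St)
    (hregext : (projComp S.domain.topologicalClosure St).IsClosed) :
    IsSelfAdjoint (compression S.domain.topologicalClosure St) ∧
    compression S.domain.topologicalClosure S ≤ compression S.domain.topologicalClosure St ∧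
    Nonempty
      (↥(defSubspace S Complex.I ⊓ S.domain.topologicalClosure) ≃ₗᵢ[ℂ]
        ↥(defSubspace S (-Complex.I) ⊓ S.domain.topologicalClosure)) := by
  set K := S.domain.topologicalClosure
  have hsaC : IsSelfAdjoint (compression K St) :=
    isSelfAdjoint_compression K hsa (dense_compression_domain S.domain hext.1) hregext
  have hle : compression K S ≤ compression K St := compression_mono K hext
  obtain ⟨U⟩ := LinearPMap.nonempty_defSubspace_equiv_of_le_isSelfAdjoint hsaC hle
    (μ := Complex.I) (by simp)
  rw [Complex.conj_I, defSubspace_compression K S.domain.le_topologicalClosure,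
    defSubspace_compression K S.domain.le_topologicalClosure] at U
  exact ⟨hsaC, hle, ⟨(Submodule.infLinearIsometryEquivComap _ _).trans
    (U.trans (Submodule.infLinearIsometryEquivComap _ _).symm)⟩⟩

/-- Let `S` be a regular non-densely defined closed symmetric operator and let
`S̃` be a regular selfadjoint extension of `S` (i.e. `P_{H₀}S̃` with domain `dom S̃` has closed
graph, where `H₀ = closure (dom S)`).  Then the compression of `S̃` to `H₀` is a selfadjoint
extension of `S₀ = P_{H₀}S` in `H₀`; consequently the semi-deficiency subspaces
`N'_i = N_i ∩ H₀` and `N'_{-i} = N_{-i} ∩ H₀` have equal Hilbert dimension. -/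
theorem isSelfAdjoint_compression_of_regular_extension
    (S : H →ₗ.[ℂ] H)
    (hsym : ∀ x y : S.domain, ⟪S x, (y : H)⟫ = ⟪(x : H), S y⟫)
    (hclosed : S.IsClosed)
    (hnd : ¬ Dense (S.domain : Set H))
    (hreg : (compression S.domain.topologicalClosure S).IsClosed)
    (St : H →ₗ.[ℂ] H) (hext : S ≤ St) (hsa : IsSelfAdjoint St)
    (hregext : (projComp S.domain.topologicalClosure St).IsClosed) :
    IsSelfAdjoint (compression S.domain.topologicalClosure St) ∧
    compression S.domain.topologicalClosure S ≤ compression S.domain.topologicalClosure St ∧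
    Nonempty
      (↥(defSubspace S Complex.I ⊓ S.domain.topologicalClosure) ≃ₗᵢ[ℂ]
        ↥(defSubspace S (-Complex.I) ⊓ S.domain.topologicalClosure)) :=
  isSelfAdjoint_compression_of_regular_extension_general S St hext hsa hregext
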